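/- Let φ be a monic real polynomial of degree 2m with distinct roots, m > 1. If φ has at least one real root, then there are no ordered factorizations φ = g·h into monic degree-m complex polynomials with h equal to the complex conjugate of g (coefficientwise conjugation). If φ has no real roots, then the number of such factorizations is exactly 2^m. -/

import Mathlib

open Polynomial Function

/-!
Over `ℂ` a monic `g` is the product of the `X - z` over its roots, and `Φ = g * conj g` says
exactly that the roots of `g` together with their conjugates are the roots of `Φ`, each once.
So the factorizations correspond to sets `T` of roots of `Φ` containing exactly one of `z`,
`conj z` for every root `z`. A real root is its own conjugate, so then no such `T` exists;
if no root is real, the `2m` roots fall into `m` conjugate pairs and `T` picks one of each.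
-/

section PairTransversal

variable {α : Type*} [DecidableEq α] {σ : α → α}

lemma Function.Involutive.mem_finset_image (hσ : Involutive σ) {s : Finset α} {a : α} :
    a ∈ s.image σ ↔ σ a ∈ s := by
  constructor
  · intro h
    obtain ⟨b, hb, rfl⟩ := Finset.mem_image.mp h
    rwa [hσ b]
  · exact fun h => Finset.mem_image.mpr ⟨σ a, h, hσ a⟩

variable (σ) in
def IsPairTransversal (R T : Finset α) : Prop :=
  Disjoint T (T.image σ) ∧ T ∪ T.image σ = R

lemma isPairTransversal_iff (hσ : Involutive σ) {R T : Finset α} :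
    IsPairTransversal σ R T ↔
      ∀ a, (a ∈ T → σ a ∉ T) ∧ (a ∈ T ∨ σ a ∈ T ↔ a ∈ R) := by
  simp only [IsPairTransversal, Finset.disjoint_left, Finset.ext_iff, Finset.mem_union,
    hσ.mem_finset_image, ← forall_and]

lemma isPairTransversal_iff_val_eq_add {R T : Finset α} :
    IsPairTransversal σ R T ↔ R.val = T.val + (T.image σ).val := by
  constructor
  · rintro ⟨hdisj, rfl⟩
    rw [← Finset.disjUnion_eq_union _ _ hdisj]
    rfl
  · intro h
    have hdisj : Disjoint T (T.image σ) :=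
      Finset.disjoint_val.mp (Multiset.nodup_add.mp (h ▸ R.nodup)).2.2
    refine ⟨hdisj, Finset.val_injective ?_⟩
    rw [h, ← Finset.disjUnion_eq_union _ _ hdisj]
    rfl

namespace IsPairTransversal

variable {R T : Finset α}

lemma apply_ne (hσ : Involutive σ) (hT : IsPairTransversal σ R T) {a : α} (ha : a ∈ R) :
    σ a ≠ a := fun hfix => by
  obtain ⟨hdisj, hmem⟩ := (isPairTransversal_iff hσ).mp hT a
  rw [hfix, or_self] at hmem
  exact hdisj (hmem.mpr ha) (by rw [hfix]; exact hmem.mpr ha)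

lemma card_eq (hσ : Injective σ) (hT : IsPairTransversal σ R T) : R.card = 2 * T.card := by
  rw [← hT.2, Finset.card_union_of_disjoint hT.1, Finset.card_image_of_injective _ hσ]
  ring

end IsPairTransversal

/-- The other transversals are `S ∪ σ '' (P \ S)` for `S ⊆ P`. -/
lemma ncard_setOf_isPairTransversal (hσ : Involutive σ) {R P : Finset α}
    (hP : IsPairTransversal σ R P) :
    {T | IsPairTransversal σ R T}.ncard = 2 ^ P.card := by
  rw [← Finset.card_powerset, ← Set.ncard_coe_finset]
  rw [isPairTransversal_iff hσ] at hP
  have hmaps : Set.MapsTo (fun S => S ∪ (P \ S).image σ) (P.powerset : Set (Finset α))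
      {T | IsPairTransversal σ R T} := by
    intro S hS
    have hSP := Finset.mem_powerset.mp hS
    simp only [Set.mem_ofPred_eq, isPairTransversal_iff hσ, Finset.mem_union, Finset.mem_sdiff,
      hσ.mem_finset_image, hσ _]
    grind
  refine ((Set.InvOn.bijOn (f' := fun T => T ∩ P) ⟨?_, ?_⟩ hmaps ?_).ncard_eq).symm
  · intro S hS
    have hSP := Finset.mem_powerset.mp hS
    ext a
    simp only [Finset.mem_union, Finset.mem_sdiff, Finset.mem_inter, hσ.mem_finset_image]
    grind
  · intro T hT
    rw [Set.mem_ofPred_eq, isPairTransversal_iff hσ] at hT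
    ext a
    simp only [Finset.mem_union, Finset.mem_sdiff, Finset.mem_inter, hσ.mem_finset_image]
    grind
  · exact fun T _ => Finset.mem_powerset.mpr Finset.inter_subset_right

end PairTransversal

namespace Polynomial

lemma map_prod_X_sub_C {R S : Type*} [CommRing R] [CommRing S] [DecidableEq S] {f : R →+* S}
    (hf : Injective f) (T : Finset R) :
    (∏ z ∈ T, (X - C z)).map f = ∏ z ∈ T.image f, (X - C z) := by
  rw [Polynomial.map_prod, Finset.prod_image fun a _ b _ h => hf h]
  simp only [Polynomial.map_sub, map_X, map_C]

lemma prod_X_sub_C_injective {R : Type*} [CommRing R] [IsDomain R] :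
    Injective fun T : Finset R => ∏ z ∈ T, (X - C z) := fun S T h =>
  Finset.val_injective <| by simpa only [roots_prod_X_sub_C] using congrArg roots h

variable {K : Type*} [Field K] [IsAlgClosed K] [DecidableEq K]

lemma eq_prod_X_sub_C_roots_toFinset {f : K[X]} (hf : f.Monic) (hnodup : f.roots.Nodup) :
    f = ∏ z ∈ f.roots.toFinset, (X - C z) := by
  rw [Finset.prod_eq_multiset_prod, Multiset.toFinset_val, Multiset.dedup_eq_self.mpr hnodup]
  exact (IsAlgClosed.splits f).eq_prod_roots_of_monic hf

lemma monic_and_eq_mul_map_iff {Φ : K[X]} (hΦ : Φ.Monic) (hnodup : Φ.roots.Nodup)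
    (σ : K →+* K) {g : K[X]} :
    g.Monic ∧ Φ = g * g.map σ ↔
      ∃ T, IsPairTransversal σ Φ.roots.toFinset T ∧ g = ∏ z ∈ T, (X - C z) := by
  constructor
  · rintro ⟨hg, hfac⟩
    have hroots : Φ.roots = g.roots + g.roots.map σ := by
      rw [hfac, roots_mul (hfac ▸ hΦ.ne_zero), (IsAlgClosed.splits g).roots_map]
    have hgnodup : g.roots.Nodup := (Multiset.nodup_add.mp (hroots ▸ hnodup)).1
    refine ⟨g.roots.toFinset, ?_, eq_prod_X_sub_C_roots_toFinset hg hgnodup⟩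
    rwa [isPairTransversal_iff_val_eq_add, Finset.image_val_of_injOn σ.injective.injOn,
      Multiset.toFinset_val, Multiset.toFinset_val, Multiset.dedup_eq_self.mpr hgnodup,
      Multiset.dedup_eq_self.mpr hnodup]
  · rintro ⟨T, hT, rfl⟩
    refine ⟨monic_prod_of_monic _ _ fun z _ => monic_X_sub_C z, ?_⟩
    rw [map_prod_X_sub_C σ.injective, ← Finset.prod_union hT.1, hT.2]
    exact eq_prod_X_sub_C_roots_toFinset hΦ hnodup

lemma setOf_factorization_eq_image {Φ : K[X]} (hΦ : Φ.Monic) (hnodup : Φ.roots.Nodup)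
    {m : ℕ} (hdeg : Φ.natDegree = 2 * m) (σ : K →+* K) :
    {p : K[X] × K[X] | p.1.Monic ∧ p.2.Monic ∧ p.1.natDegree = m ∧ p.2.natDegree = m ∧
        Φ = p.1 * p.2 ∧ p.2 = p.1.map σ} =
      (fun T => (∏ z ∈ T, (X - C z), (∏ z ∈ T, (X - C z)).map σ)) ''
        {T | IsPairTransversal σ Φ.roots.toFinset T} := by
  ext ⟨g, h⟩
  simp only [Set.mem_ofPred_eq, Set.mem_image, Prod.mk.injEq]
  constructor
  · rintro ⟨hg, -, -, -, hfac, rfl⟩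
    obtain ⟨T, hT, rfl⟩ := (monic_and_eq_mul_map_iff hΦ hnodup σ).mp ⟨hg, hfac⟩
    exact ⟨T, hT, rfl, rfl⟩
  · rintro ⟨T, hT, rfl, rfl⟩
    obtain ⟨hg, hfac⟩ := (monic_and_eq_mul_map_iff hΦ hnodup σ).mpr ⟨T, hT, rfl⟩
    have hgdeg : (∏ z ∈ T, (X - C z)).natDegree = m := by
      have := congrArg natDegree hfac
      rw [hg.natDegree_mul (hg.map σ), natDegree_map, hdeg] at this
      omega
    exact ⟨hg, hg.map σ, hgdeg, by rwa [natDegree_map], hfac, rfl⟩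

end Polynomial

lemma Complex.isPairTransversal_filter_im_pos {R : Finset ℂ}
    (hconj : ∀ z ∈ R, starRingEnd ℂ z ∈ R) (him : ∀ z ∈ R, z.im ≠ 0) :
    IsPairTransversal (starRingEnd ℂ) R (R.filter fun z => 0 < z.im) := by
  rw [isPairTransversal_iff Complex.conj_conj]
  intro z
  simp only [Finset.mem_filter, Complex.conj_im, Left.neg_pos_iff]
  refine ⟨fun h _ => by linarith [h.2], ⟨fun h => h.elim And.left ?_, fun hz => ?_⟩⟩
  · exact fun h => by simpa using hconj _ h.1
  · rcases (him z hz).lt_or_gt with hneg | hpos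
    · exact Or.inr ⟨hconj z hz, hneg⟩
    · exact Or.inl ⟨hz, hpos⟩

theorem conjugate_factorizations (m : ℕ)
    (φ : Polynomial ℝ) (hmonic : φ.Monic) (hdeg : φ.natDegree = 2 * m)
    (hnodup : ((φ.map (algebraMap ℝ ℂ)).roots).Nodup) :
    ((∃ x : ℝ, φ.eval x = 0) →
      {p : Polynomial ℂ × Polynomial ℂ |
        p.1.Monic ∧ p.2.Monic ∧ p.1.natDegree = m ∧ p.2.natDegree = m ∧
        φ.map (algebraMap ℝ ℂ) = p.1 * p.2 ∧
        p.2 = p.1.map (starRingEnd ℂ)} = ∅) ∧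
    ((¬ ∃ x : ℝ, φ.eval x = 0) →
      Set.ncard {p : Polynomial ℂ × Polynomial ℂ |
        p.1.Monic ∧ p.2.Monic ∧ p.1.natDegree = m ∧ p.2.natDegree = m ∧
        φ.map (algebraMap ℝ ℂ) = p.1 * p.2 ∧
        p.2 = p.1.map (starRingEnd ℂ)} = 2 ^ m) := by
  classical
  have hΦdeg : (φ.map (algebraMap ℝ ℂ)).natDegree = 2 * m := by rwa [natDegree_map]
  rw [setOf_factorization_eq_image (hmonic.map _) hnodup hΦdeg]
  set R := (φ.map (algebraMap ℝ ℂ)).roots.toFinset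
  have hmem : ∀ z, z ∈ R ↔ aeval z φ = 0 := fun z => by
    rw [Multiset.mem_toFinset, mem_roots ((hmonic.map _).ne_zero), IsRoot.def,
      eval_map_algebraMap]
  have hmem_real : ∀ x : ℝ, (x : ℂ) ∈ R ↔ φ.eval x = 0 := fun x => by
    rw [hmem, ← Complex.coe_algebraMap, aeval_algebraMap_apply_eq_algebraMap_eval,
      Complex.coe_algebraMap, Complex.ofReal_eq_zero]
  refine ⟨fun ⟨x, hx⟩ => ?_, fun hreal => ?_⟩
  · refine Set.image_eq_empty.mpr (Set.eq_empty_of_forall_notMem fun T hT => ?_)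
    exact hT.apply_ne Complex.conj_conj ((hmem_real x).mpr hx) (Complex.conj_ofReal x)
  · have hconj : ∀ z ∈ R, starRingEnd ℂ z ∈ R := fun z hz => by
      rw [hmem, aeval_conj, (hmem z).mp hz, map_zero]
    have him : ∀ z ∈ R, z.im ≠ 0 := fun z hz him => hreal ⟨z.re, (hmem_real _).mp <| by
      rwa [Complex.conj_eq_iff_re.mp (Complex.conj_eq_iff_im.mpr him)]⟩
    have hP := Complex.isPairTransversal_filter_im_pos hconj him
    have hR : R.card = 2 * m := by
      rw [Multiset.toFinset_card_of_nodup hnodup,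
        ← (IsAlgClosed.splits _).natDegree_eq_card_roots, hΦdeg]
    rw [Set.ncard_image_of_injective _
        fun S T h => prod_X_sub_C_injective (congrArg Prod.fst h),
      ncard_setOf_isPairTransversal Complex.conj_conj hP]
    have := hP.card_eq (RingHom.injective _)
    congr 1
    omega
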